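/- arXiv:1805.09211 — 2 statements merged into one kernel-verified Lean document; each statement's English description precedes it below -/
import Mathlib

section
/- Let d ≥ 9 be odd and suppose ⌊√d⌋·⌈√d⌉ < d ≤ ⌊√d⌋·(⌈√d⌉ + 1). Let k₂ be the largest nonnegative integer k such that d ≤ (⌊√d⌋ − k)(⌈√d⌉ + 1 + k). Then there exists a set S ⊆ ℤ/dℤ × ℤ/dℤ of cardinality |S| = ⌊√d⌋ + ⌈√d⌉ + 1 + ⌈⌈(d−1)/4⌉ / (⌈√d⌉ + 1 + k₂)⌉ such that there is no unit vector α ∈ ℂ^d for which the vectors X^m Z^n α, (m,n) ∈ S, are pairwise orthogonal; that is, there exists a 1-LOCC indistinguishable set of that many generalized Bell states in d⊗d. -/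
open Complex

/-- `ω d = exp(2πi/d)`, the primitive `d`-th root of unity in `ℂ`. -/
noncomputable def ω (d : ℕ) : ℂ := Complex.exp (2 * Real.pi * Complex.I / d)

/-- The generalized Pauli operator `U_{m,n} = X^m Z^n` acting on `ℂ^d`
(coordinates indexed by `ZMod d`), where `X e_j = e_{j+1}` and `Z e_j = ω^j e_j`:
`(U_{m,n} α)_k = ω^{n (k-m)} α_{k-m}`. -/
noncomputable def pU (d : ℕ) [NeZero d] (m n : ZMod d) (α : ZMod d → ℂ) : ZMod d → ℂ :=
  fun k => ω d ^ (n.val * (k - m).val) * α (k - m)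

/-- The standard Hermitian inner product on `ℂ^d`. -/
noncomputable def ip (d : ℕ) [NeZero d] (α β : ZMod d → ℂ) : ℂ :=
  ∑ j : ZMod d, (starRingEnd ℂ) (α j) * β j

noncomputable def chi (d : ℕ) [NeZero d] (u : ZMod d) : ℂ := ω d ^ u.val

section aux
variable {d : ℕ} [NeZero d]

lemma omega_prim : IsPrimitiveRoot (ω d) d :=
  Complex.isPrimitiveRoot_exp d (NeZero.ne d)

lemma omega_pow_d : ω d ^ d = 1 := omega_prim.pow_eq_one

lemma omega_pow_mod (e : ℕ) : ω d ^ (e % d) = ω d ^ e := by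
  conv_rhs => rw [← Nat.div_add_mod e d]
  rw [pow_add, pow_mul, omega_pow_d, one_pow, one_mul]

lemma chi_natCast (k : ℕ) : chi d (k : ZMod d) = ω d ^ k := by
  rw [chi, ZMod.val_natCast, omega_pow_mod]

lemma chi_add (u v : ZMod d) : chi d (u + v) = chi d u * chi d v := by
  have hu : ((u.val : ℕ) : ZMod d) = u := ZMod.natCast_rightInverse u
  have hv : ((v.val : ℕ) : ZMod d) = v := ZMod.natCast_rightInverse v
  calc chi d (u + v) = chi d (((u.val + v.val : ℕ) : ZMod d)) := by rw [Nat.cast_add, hu, hv]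
  _ = ω d ^ (u.val + v.val) := chi_natCast _
  _ = chi d u * chi d v := by rw [pow_add]; rfl

lemma chi_zero : chi d (0 : ZMod d) = 1 := by
  rw [chi, ZMod.val_zero, pow_zero]

lemma chi_mul_chi_neg (u : ZMod d) : chi d u * chi d (-u) = 1 := by
  rw [← chi_add, add_neg_cancel, chi_zero]

lemma chi_ne_zero (u : ZMod d) : chi d u ≠ 0 := by
  intro h
  have := chi_mul_chi_neg u
  rw [h, zero_mul] at this
  exact zero_ne_one this

omit [NeZero d] in
lemma conj_omega_mul : (starRingEnd ℂ) (ω d) * ω d = 1 := by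
  rw [ω, ← Complex.exp_conj, ← Complex.exp_add]
  have h0 : (starRingEnd ℂ) (2 * (Real.pi : ℂ) * Complex.I / d) + 2 * (Real.pi : ℂ) * Complex.I / d = 0 := by
    have hre : (2 * (Real.pi : ℂ) * Complex.I / d).re = 0 := by
      simp [Complex.div_re]
    rw [add_comm, Complex.add_conj, hre]
    norm_num
  rw [h0, Complex.exp_zero]

lemma conj_chi (u : ZMod d) : (starRingEnd ℂ) (chi d u) = chi d (-u) := by
  have h1 : (starRingEnd ℂ) (chi d u) * chi d u = 1 := by
    rw [chi, map_pow, ← mul_pow, conj_omega_mul, one_pow]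
  have h2 := chi_mul_chi_neg u
  calc (starRingEnd ℂ) (chi d u) = (starRingEnd ℂ) (chi d u) * (chi d u * chi d (-u)) := by
        rw [h2, mul_one]
  _ = ((starRingEnd ℂ) (chi d u) * chi d u) * chi d (-u) := by ring
  _ = chi d (-u) := by rw [h1, one_mul]

lemma chi_mul_val (u w : ZMod d) : ω d ^ (u.val * w.val) = chi d (u * w) := by
  rw [chi, ZMod.val_mul, omega_pow_mod]

lemma chi_sum (u : ZMod d) : (∑ t : ZMod d, chi d (t * u)) = if u = 0 then (d : ℂ) else 0 := by
  split_ifs with h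
  · subst h
    simp only [mul_zero, chi_zero]
    simp [ZMod.card]
  · have hz : ∀ t : ZMod d, chi d (t * u) = (chi d u) ^ t.val := by
      intro t
      rw [← chi_mul_val, mul_comm (t.val), pow_mul, chi]
    simp only [hz]
    have hre : (∑ t : ZMod d, (chi d u) ^ t.val) = ∑ n ∈ Finset.range d, (chi d u) ^ n := by
      refine Finset.sum_nbij' (i := fun t : ZMod d => t.val) (j := fun n : ℕ => (n : ZMod d))
        ?_ ?_ ?_ ?_ ?_
      · intro t _; exact Finset.mem_range.mpr (ZMod.val_lt t)
      · intro n _; exact Finset.mem_univ _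
      · intro t _; exact ZMod.natCast_rightInverse t
      · intro n hn; exact ZMod.val_natCast_of_lt (Finset.mem_range.mp hn)
      · intro t _; rfl
    rw [hre, geom_sum_eq]
    · have : (chi d u) ^ d = 1 := by
        rw [chi, ← pow_mul, mul_comm, pow_mul, omega_pow_d, one_pow]
      rw [this, sub_self, zero_div]
    · intro h1
      have hdvd : d ∣ u.val :=
        (IsPrimitiveRoot.pow_eq_one_iff_dvd (omega_prim (d := d)) u.val).mp h1
      have hv : u.val = 0 := Nat.eq_zero_of_dvd_of_lt hdvd (ZMod.val_lt u)
      exact h ((ZMod.val_eq_zero u).mp hv)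
end aux

section claimA
variable {d : ℕ} [NeZero d]

lemma pU_eq (m n : ZMod d) (α : ZMod d → ℂ) (k : ZMod d) :
    pU d m n α k = chi d (n * (k - m)) * α (k - m) := by
  rw [pU, chi_mul_val]

lemma ip_pU (α : ZMod d → ℂ) (m n m' n' : ZMod d) :
    ip d (pU d m n α) (pU d m' n' α)
      = chi d (-(n * (m' - m))) *
        ∑ i : ZMod d, chi d ((n' - n) * i) * ((starRingEnd ℂ) (α (i + (m' - m))) * α i) := by
  rw [ip, Finset.mul_sum]
  have hre := Fintype.sum_equiv (Equiv.addRight m')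
      (fun i : ZMod d => (starRingEnd ℂ) (pU d m n α (i + m')) * pU d m' n' α (i + m'))
      (fun k : ZMod d => (starRingEnd ℂ) (pU d m n α k) * pU d m' n' α k)
      (fun i => rfl)
  rw [← hre]
  apply Finset.sum_congr rfl
  intro i _
  simp only [pU_eq, add_sub_cancel_right]
  have h1 : i + m' - m = i + (m' - m) := by ring
  rw [h1, map_mul, conj_chi]
  have h2 : chi d (-(n * (i + (m' - m)))) * chi d (n' * i)
      = chi d (-(n * (m' - m))) * chi d ((n' - n) * i) := by
    rw [← chi_add, ← chi_add]
    congr 1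
    ring
  calc chi d (-(n * (i + (m' - m)))) * (starRingEnd ℂ) (α (i + (m' - m)))
        * (chi d (n' * i) * α i)
      = (chi d (-(n * (i + (m' - m)))) * chi d (n' * i))
        * ((starRingEnd ℂ) (α (i + (m' - m))) * α i) := by ring
  _ = (chi d (-(n * (m' - m))) * chi d ((n' - n) * i))
        * ((starRingEnd ℂ) (α (i + (m' - m))) * α i) := by rw [h2]
  _ = chi d (-(n * (m' - m)))
        * (chi d ((n' - n) * i) * ((starRingEnd ℂ) (α (i + (m' - m))) * α i)) := by ring
end claimA

noncomputable def psi (d : ℕ) [NeZero d] (α : ZMod d → ℂ) (s t : ZMod d) : ℂ :=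
  ∑ i : ZMod d, chi d (t * i) * ((starRingEnd ℂ) (α (i + s)) * α i)

section part2
variable {d : ℕ} [NeZero d]

lemma ip_pU_psi (α : ZMod d → ℂ) (m n m' n' : ZMod d) :
    ip d (pU d m n α) (pU d m' n' α)
      = chi d (-(n * (m' - m))) * psi d α (m' - m) (n' - n) := ip_pU α m n m' n'

lemma psi_zero_apply (α : ZMod d → ℂ) (t : ZMod d) :
    psi d α 0 t = ∑ i : ZMod d, chi d (t * i) * ((starRingEnd ℂ) (α i) * α i) := by
  unfold psi; simp only [add_zero]

lemma conj_psi_zero (α : ZMod d → ℂ) (t : ZMod d) :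
    (starRingEnd ℂ) (psi d α 0 t) = ∑ j : ZMod d, chi d (-(t * j)) * ((starRingEnd ℂ) (α j) * α j) := by
  rw [psi_zero_apply, map_sum]
  refine Finset.sum_congr rfl fun j _ => ?_
  rw [map_mul, conj_chi, map_mul, Complex.conj_conj]
  ring

lemma psi_zero_neg (α : ZMod d → ℂ) (t : ZMod d) :
    psi d α 0 (-t) = (starRingEnd ℂ) (psi d α 0 t) := by
  rw [conj_psi_zero, psi_zero_apply]
  refine Finset.sum_congr rfl fun j _ => ?_
  congr 2
  ring

lemma psi_inversion (α : ZMod d → ℂ) (h : ∀ t : ZMod d, psi d α 1 t = 0) (i0 : ZMod d) :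
    (starRingEnd ℂ) (α (i0 + 1)) * α i0 = 0 := by
  have h0 : (0 : ℂ) = ∑ t : ZMod d, chi d (-(t * i0)) * psi d α 1 t := by
    simp [h]
  have hswap : ∑ t : ZMod d, chi d (-(t * i0)) * psi d α 1 t
      = ∑ i : ZMod d, ((starRingEnd ℂ) (α (i + 1)) * α i) * ∑ t : ZMod d, chi d (t * (i - i0)) := by
    unfold psi
    simp only [Finset.mul_sum]
    rw [Finset.sum_comm]
    refine Finset.sum_congr rfl fun i _ => ?_
    refine Finset.sum_congr rfl fun t _ => ?_
    have harg : -(t * i0) + t * i = t * (i - i0) := by ring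
    calc chi d (-(t * i0)) * (chi d (t * i) * ((starRingEnd ℂ) (α (i + 1)) * α i))
        = (chi d (-(t * i0)) * chi d (t * i)) * ((starRingEnd ℂ) (α (i + 1)) * α i) := by ring
    _ = chi d (t * (i - i0)) * ((starRingEnd ℂ) (α (i + 1)) * α i) := by rw [← chi_add, harg]
    _ = ((starRingEnd ℂ) (α (i + 1)) * α i) * chi d (t * (i - i0)) := by ring
  rw [hswap] at h0
  simp only [chi_sum, sub_eq_zero] at h0
  rw [Finset.sum_congr rfl (fun i (_ : i ∈ Finset.univ) => by
      rw [mul_ite, mul_zero] : ∀ i ∈ Finset.univ, _ = _)] at h0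
  rw [Finset.sum_ite_eq' Finset.univ i0
      (fun i => ((starRingEnd ℂ) (α (i + 1)) * α i) * (d : ℂ))] at h0
  simp only [Finset.mem_univ, if_true] at h0
  have hd0 : (d : ℂ) ≠ 0 := Nat.cast_ne_zero.mpr (NeZero.ne d)
  rcases mul_eq_zero.mp h0.symm with h' | h'
  · exact h'
  · exact absurd h' hd0

lemma psi_final_identity (α : ZMod d → ℂ) :
    ∑ t : ZMod d, psi d α 0 t * (starRingEnd ℂ) (psi d α 0 t) * chi d (-t)
      = (d : ℂ) * ∑ j : ZMod d,
          (((starRingEnd ℂ) (α (j + 1)) * α (j + 1)) * ((starRingEnd ℂ) (α j) * α j)) := by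
  have hstep : ∀ t : ZMod d, psi d α 0 t * (starRingEnd ℂ) (psi d α 0 t) * chi d (-t)
      = ∑ i : ZMod d, ∑ j : ZMod d,
          (((starRingEnd ℂ) (α i) * α i) * ((starRingEnd ℂ) (α j) * α j))
            * chi d (t * (i - j - 1)) := by
    intro t
    rw [conj_psi_zero, psi_zero_apply, Finset.sum_mul_sum, Finset.sum_mul]
    refine Finset.sum_congr rfl fun i _ => ?_
    rw [Finset.sum_mul]
    refine Finset.sum_congr rfl fun j _ => ?_
    have harg : t * i + (-(t * j) + -t) = t * (i - j - 1) := by ring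
    have hchi : chi d (t * i) * (chi d (-(t * j)) * chi d (-t)) = chi d (t * (i - j - 1)) := by
      rw [← chi_add, ← chi_add, harg]
    calc chi d (t * i) * ((starRingEnd ℂ) (α i) * α i)
          * (chi d (-(t * j)) * ((starRingEnd ℂ) (α j) * α j)) * chi d (-t)
        = ((starRingEnd ℂ) (α i) * α i * ((starRingEnd ℂ) (α j) * α j))
            * (chi d (t * i) * (chi d (-(t * j)) * chi d (-t))) := by ring
    _ = (starRingEnd ℂ) (α i) * α i * ((starRingEnd ℂ) (α j) * α j)
            * chi d (t * (i - j - 1)) := by rw [hchi]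
  rw [Finset.sum_congr rfl fun t _ => hstep t]
  calc ∑ t : ZMod d, ∑ i : ZMod d, ∑ j : ZMod d,
          (((starRingEnd ℂ) (α i) * α i) * ((starRingEnd ℂ) (α j) * α j))
            * chi d (t * (i - j - 1))
      = ∑ i : ZMod d, ∑ j : ZMod d, ∑ t : ZMod d,
          (((starRingEnd ℂ) (α i) * α i) * ((starRingEnd ℂ) (α j) * α j))
            * chi d (t * (i - j - 1)) := by
        rw [Finset.sum_comm]
        exact Finset.sum_congr rfl fun i _ => Finset.sum_comm
  _ = ∑ i : ZMod d, ∑ j : ZMod d,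
          (((starRingEnd ℂ) (α i) * α i) * ((starRingEnd ℂ) (α j) * α j))
            * (if i - j - 1 = 0 then (d : ℂ) else 0) := by
        refine Finset.sum_congr rfl fun i _ => Finset.sum_congr rfl fun j _ => ?_
        rw [← Finset.mul_sum, chi_sum]
  _ = ∑ j : ZMod d, ∑ i : ZMod d,
          (if i = j + 1 then (((starRingEnd ℂ) (α i) * α i) * ((starRingEnd ℂ) (α j) * α j)) * (d : ℂ) else 0) := by
        rw [Finset.sum_comm]
        refine Finset.sum_congr rfl fun j _ => Finset.sum_congr rfl fun i _ => ?_
        rw [mul_ite, mul_zero, sub_sub]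
        congr 1
        exact propext sub_eq_zero
  _ = ∑ j : ZMod d,
          (((starRingEnd ℂ) (α (j + 1)) * α (j + 1)) * ((starRingEnd ℂ) (α j) * α j)) * (d : ℂ) := by
        refine Finset.sum_congr rfl fun j _ => ?_
        rw [Finset.sum_ite_eq' Finset.univ (j + 1)
          (fun i => (((starRingEnd ℂ) (α i) * α i) * ((starRingEnd ℂ) (α j) * α j)) * (d : ℂ))]
        simp
  _ = (d : ℂ) * ∑ j : ZMod d,
          (((starRingEnd ℂ) (α (j + 1)) * α (j + 1)) * ((starRingEnd ℂ) (α j) * α j)) := by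
        rw [Finset.mul_sum]
        exact Finset.sum_congr rfl fun j _ => by ring

end part2

section part3
variable {d : ℕ} [NeZero d]

lemma chi_re_eq (u : ZMod d) : (chi d u).re = Real.cos (u.val * (2 * Real.pi / d)) := by
  have hω : ω d = Complex.exp (((2 * Real.pi / d : ℝ) : ℂ) * Complex.I) := by
    rw [ω]
    congr 1
    push_cast
    ring
  have h2 : chi d u = Complex.exp (((u.val * (2 * Real.pi / d) : ℝ) : ℂ) * Complex.I) := by
    rw [chi, hω, ← Complex.exp_nat_mul]
    congr 1
    push_cast
    ring
  rw [h2, Complex.exp_ofReal_mul_I_re]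

lemma cos_nonneg_of_le_quarter {w : ℕ} (hd : 0 < d) (h4 : 4 * w ≤ d) :
    0 ≤ Real.cos (w * (2 * Real.pi / d)) := by
  apply Real.cos_nonneg_of_mem_Icc
  have hpi := Real.pi_pos
  have hd' : (0 : ℝ) < d := by exact_mod_cast hd
  constructor
  · have h0 : (0:ℝ) ≤ w * (2 * Real.pi / d) := by positivity
    linarith
  · have hw : (4 * w : ℝ) ≤ d := by exact_mod_cast h4
    have heq : (w:ℝ) * (2 * Real.pi / d) = (w * 2 * Real.pi) / d := by ring
    rw [heq, div_le_iff₀ hd']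
    nlinarith

lemma re_chi_nonneg (u : ZMod d) (h : 4 * u.val ≤ d ∨ 4 * (d - u.val) ≤ d) :
    0 ≤ (chi d u).re := by
  have hd : 0 < d := Nat.pos_of_ne_zero (NeZero.ne d)
  rw [chi_re_eq]
  rcases h with h4 | h4
  · exact cos_nonneg_of_le_quarter hd h4
  · have hvd : u.val < d := ZMod.val_lt u
    have hcast : ((u.val : ℝ)) * (2 * Real.pi / d) = 2 * Real.pi - ((d - u.val : ℕ) : ℝ) * (2 * Real.pi / d) := by
      have hdd : ((d - u.val : ℕ) : ℝ) = (d : ℝ) - u.val := by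
        push_cast [Nat.cast_sub hvd.le]
        ring
      rw [hdd]
      have hd' : (d : ℝ) ≠ 0 := by positivity
      field_simp
      ring
    rw [hcast, Real.cos_two_pi_sub]
    exact cos_nonneg_of_le_quarter hd h4

end part3

/-- (Theorem 3 of the paper, second case.) Let `d ≥ 9` be odd with
`⌊√d⌋⌈√d⌉ < d ≤ ⌊√d⌋(⌈√d⌉ + 1)`, and let `k₂` be the largest `k ≥ 0` with
`d ≤ (⌊√d⌋ - k)(⌈√d⌉ + 1 + k)`. Then there exists a 1-LOCC indistinguishable set
of `⌊√d⌋ + ⌈√d⌉ + 1 + ⌈⌈(d-1)/4⌉ / (⌈√d⌉ + 1 + k₂)⌉` generalized Bell states in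
`d ⊗ d`. -/
theorem stmt_11 (d : ℕ) [NeZero d] (hd : 9 ≤ d) (hodd : Odd d)
    (hlt : ⌊Real.sqrt d⌋₊ * ⌈Real.sqrt d⌉₊ < d)
    (hle : d ≤ ⌊Real.sqrt d⌋₊ * (⌈Real.sqrt d⌉₊ + 1))
    (k₂ : ℕ)
    (hk₂ : IsGreatest {k : ℕ |
      (d : ℤ) ≤ ((⌊Real.sqrt d⌋₊ : ℤ) - (k : ℤ)) * ((⌈Real.sqrt d⌉₊ : ℤ) + 1 + (k : ℤ))} k₂) :
    ∃ S : Finset (ZMod d × ZMod d),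
      S.card = ⌊Real.sqrt d⌋₊ + ⌈Real.sqrt d⌉₊ + 1 +
          ⌈(⌈((d : ℚ) - 1) / 4⌉₊ : ℚ) / ((⌈Real.sqrt d⌉₊ : ℚ) + 1 + (k₂ : ℚ))⌉₊ ∧
      ¬ ∃ α : ZMod d → ℂ, ip d α α = 1 ∧
        ∀ p ∈ S, ∀ q ∈ S, p ≠ q → ip d (pU d p.1 p.2 α) (pU d q.1 q.2 α) = 0 := by
  classical
  have hk1 := hk₂.1
  simp only [Set.mem_setOf_eq] at hk1
  set a := ⌊Real.sqrt d⌋₊ with ha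
  set b := ⌈Real.sqrt d⌉₊ with hb
  set Λ := ⌈((d : ℚ) - 1) / 4⌉₊ with hΛdef
  set R := ⌈(Λ : ℚ) / ((b : ℚ) + 1 + (k₂ : ℚ))⌉₊ with hRdef
  have hdodd : d % 2 = 1 := Nat.odd_iff.mp hodd
  -- k₂ < a
  have hk2a : k₂ < a := by
    by_contra hcon
    push_neg at hcon
    have h1 : ((a : ℤ) - (k₂ : ℤ)) ≤ 0 := by
      have : (a : ℤ) ≤ (k₂ : ℤ) := by exact_mod_cast hcon
      omega
    have h2 : (0 : ℤ) < (b : ℤ) + 1 + (k₂ : ℤ) := by positivity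
    nlinarith [hk1, (by exact_mod_cast hd : (9 : ℤ) ≤ (d : ℤ))]
  set B := b + 1 + k₂ with hBdef
  set K := a - k₂ with hKdef
  have hB1 : 1 ≤ B := by omega
  have hK1 : 1 ≤ K := by omega
  have hKB : d ≤ K * B := by
    have hKcast : (K : ℤ) = (a : ℤ) - (k₂ : ℤ) := by
      rw [hKdef]; push_cast [Nat.cast_sub hk2a.le]; ring
    have hBcast : (B : ℤ) = (b : ℤ) + 1 + (k₂ : ℤ) := by push_cast [hBdef]; ring
    have : (d : ℤ) ≤ (K : ℤ) * (B : ℤ) := by rw [hKcast, hBcast]; exact hk1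
    exact_mod_cast this
  have hΛ4 : d ≤ 4 * Λ + 1 := by
    have h1 := Nat.le_ceil (((d : ℚ) - 1) / 4)
    rw [← hΛdef] at h1
    have h2 : (d : ℚ) ≤ 4 * (Λ : ℚ) + 1 := by
      rw [div_le_iff₀ (by norm_num : (0:ℚ) < 4)] at h1
      linarith
    exact_mod_cast h2
  have hRB : Λ ≤ R * B := by
    have h1 := Nat.le_ceil ((Λ : ℚ) / ((b : ℚ) + 1 + (k₂ : ℚ)))
    rw [← hRdef] at h1
    have hpos : (0:ℚ) < (b : ℚ) + 1 + (k₂ : ℚ) := by positivity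
    rw [div_le_iff₀ hpos] at h1
    have h2 : (Λ : ℚ) ≤ (R : ℚ) * (B : ℚ) := by
      rw [hBdef]; push_cast; linarith
    exact_mod_cast h2
  -- the set S₀
  set P₀ : Finset (ZMod d × ZMod d) :=
    (Finset.range B).image (fun y : ℕ => ((0 : ZMod d), ((y : ℕ) : ZMod d))) with hP₀def
  set Q₀ : Finset (ZMod d × ZMod d) :=
    (Finset.range K).image (fun j : ℕ => ((1 : ZMod d), ((B * j : ℕ) : ZMod d))) with hQ₀def
  set E₀ : Finset (ZMod d × ZMod d) :=
    (Finset.range R).image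
      (fun i : ℕ => ((0 : ZMod d), ((d / 4 + (i + 1) * B : ℕ) : ZMod d))) with hE₀def
  set S₀ : Finset (ZMod d × ZMod d) := (P₀ ∪ Q₀) ∪ E₀ with hS₀def
  have hcard : S₀.card ≤ a + b + 1 + R := by
    have h1 := Finset.card_union_le (P₀ ∪ Q₀) E₀
    have h2 := Finset.card_union_le P₀ Q₀
    have h3 : P₀.card ≤ B := by
      rw [hP₀def]; exact le_trans Finset.card_image_le (le_of_eq (Finset.card_range B))
    have h4 : Q₀.card ≤ K := by
      rw [hQ₀def]; exact le_trans Finset.card_image_le (le_of_eq (Finset.card_range K))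
    have h5 : E₀.card ≤ R := by
      rw [hE₀def]; exact le_trans Finset.card_image_le (le_of_eq (Finset.card_range R))
    calc S₀.card ≤ (P₀ ∪ Q₀).card + E₀.card := h1
    _ ≤ (P₀.card + Q₀.card) + E₀.card := by omega
    _ ≤ (B + K) + R := by
        have := add_le_add (add_le_add h3 h4) h5
        omega
    _ = a + b + 1 + R := by omega
  have hNuniv : a + b + 1 + R ≤ Fintype.card (ZMod d × ZMod d) := by
    have hcardU : Fintype.card (ZMod d × ZMod d) = d * d := by
      rw [Fintype.card_prod, ZMod.card]
    have hbd : b ≤ d := by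
      rw [hb]
      apply Nat.ceil_le.mpr
      have h1 : Real.sqrt d ≤ Real.sqrt ((d:ℝ)^2) := by
        apply Real.sqrt_le_sqrt
        have : (1:ℝ) ≤ (d:ℝ) := by exact_mod_cast (by omega : 1 ≤ d)
        nlinarith
      rw [Real.sqrt_sq (by positivity)] at h1
      exact h1
    have had : a ≤ d := le_trans (Nat.floor_le_ceil _) hbd
    have hRd : R ≤ Λ := by
      rw [hRdef]
      calc ⌈(Λ : ℚ) / ((b : ℚ) + 1 + (k₂ : ℚ))⌉₊ ≤ ⌈(Λ : ℚ)⌉₊ := by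
            apply Nat.ceil_le_ceil
            apply div_le_self (by positivity)
            have hb0 : (0:ℚ) ≤ (b : ℚ) := by positivity
            have hk0 : (0:ℚ) ≤ (k₂ : ℚ) := by positivity
            linarith
      _ = Λ := Nat.ceil_natCast Λ
    have hΛd : Λ ≤ d := by
      rw [hΛdef]
      apply Nat.ceil_le.mpr
      have : (0:ℚ) ≤ (d:ℚ) := by positivity
      rw [div_le_iff₀ (by norm_num : (0:ℚ) < 4)]
      linarith
    have h9d : 9 * d ≤ d * d := Nat.mul_le_mul_right d hd
    omega
  obtain ⟨S, hS₀S, -, hScard⟩ :=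
    Finset.exists_subsuperset_card_eq (Finset.subset_univ S₀) hcard
      (by rw [Finset.card_univ]; exact hNuniv)
  refine ⟨S, hScard, ?_⟩
  rintro ⟨α, hα, horth⟩
  haveI : Fact (1 < d) := ⟨by omega⟩
  have hne01 : (0 : ZMod d) ≠ 1 := zero_ne_one
  -- membership helpers
  have hPmem : ∀ y : ℕ, y < B → ((0 : ZMod d), (y : ZMod d)) ∈ S := by
    intro y hy
    apply hS₀S
    rw [hS₀def]
    refine Finset.mem_union_left _ (Finset.mem_union_left _ ?_)
    rw [hP₀def]
    exact Finset.mem_image_of_mem _ (Finset.mem_range.mpr hy)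
  have hQmem : ∀ j : ℕ, j < K → ((1 : ZMod d), ((B * j : ℕ) : ZMod d)) ∈ S := by
    intro j hj
    apply hS₀S
    rw [hS₀def]
    refine Finset.mem_union_left _ (Finset.mem_union_right _ ?_)
    rw [hQ₀def]
    exact Finset.mem_image_of_mem _ (Finset.mem_range.mpr hj)
  have hEmem : ∀ i : ℕ, i < R → ((0 : ZMod d), ((d / 4 + (i + 1) * B : ℕ) : ZMod d)) ∈ S := by
    intro i hi
    apply hS₀S
    rw [hS₀def]
    refine Finset.mem_union_right _ ?_
    rw [hE₀def]
    exact Finset.mem_image_of_mem _ (Finset.mem_range.mpr hi)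
  -- orthogonality in psi form
  have hΨ : ∀ p q : ZMod d × ZMod d, p ∈ S → q ∈ S → p ≠ q →
      psi d α (q.1 - p.1) (q.2 - p.2) = 0 := by
    intro p q hp hq hpq
    have h := horth p hp q hq hpq
    rw [ip_pU_psi] at h
    rcases mul_eq_zero.mp h with h' | h'
    · exact absurd h' (chi_ne_zero _)
    · exact h'
  -- arithmetic helpers
  have hcomm1 : K * B = B * K := Nat.mul_comm K B
  have hBK1 : B * K = B * (K - 1) + B := by
    have hK' : K - 1 + 1 = K := by omega
    calc B * K = B * ((K - 1) + 1) := by rw [hK']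
    _ = B * (K - 1) + B := by rw [Nat.mul_add, Nat.mul_one]
  have hΨ1 : ∀ t : ZMod d, psi d α 1 t = 0 := by
    intro t
    have hvd : t.val < d := ZMod.val_lt t
    have htv : ((t.val : ℕ) : ZMod d) = t := ZMod.natCast_rightInverse t
    rcases le_or_gt t.val (B * (K - 1)) with hcase | hcase
    · set e := t.val + B - 1 with he
      have hdm := Nat.div_add_mod e B
      have hmlt : e % B < B := Nat.mod_lt _ (by omega)
      set j := e / B with hj
      have hwv1 : t.val ≤ B * j := by omega
      have hwv2 : B * j ≤ t.val + B - 1 := by omega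
      have hjK : j < K := by
        have hwlt : B * j < B * K := by omega
        exact Nat.lt_of_mul_lt_mul_left hwlt
      set y := B * j - t.val with hy
      have hyB : y < B := by omega
      have hcast : ((B * j : ℕ) : ZMod d) - ((y : ℕ) : ZMod d) = t := by
        have h1 : ((B * j : ℕ) : ZMod d) - ((y : ℕ) : ZMod d) = ((B * j - y : ℕ) : ZMod d) := by
          rw [Nat.cast_sub (by omega : y ≤ B * j)]
        rw [h1, (by omega : B * j - y = t.val), htv]
      have hp := hPmem y hyB
      have hq := hQmem j hjK
      have hne : ((0 : ZMod d), ((y : ℕ) : ZMod d)) ≠ ((1 : ZMod d), ((B * j : ℕ) : ZMod d)) := by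
        intro hcon
        exact hne01 (congrArg Prod.fst hcon)
      have h := hΨ _ _ hp hq hne
      have h' : psi d α ((1 : ZMod d) - 0) (((B * j : ℕ) : ZMod d) - ((y : ℕ) : ZMod d)) = 0 := h
      rwa [sub_zero, hcast] at h'
    · set y := d - t.val with hy
      have hyB : y < B := by omega
      have hp := hPmem y hyB
      have hq := hQmem 0 (by omega : 0 < K)
      have hne : ((0 : ZMod d), ((y : ℕ) : ZMod d)) ≠ ((1 : ZMod d), ((B * 0 : ℕ) : ZMod d)) := by
        intro hcon
        exact hne01 (congrArg Prod.fst hcon)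
      have h := hΨ _ _ hp hq hne
      have h' : psi d α ((1 : ZMod d) - 0) (((B * 0 : ℕ) : ZMod d) - ((y : ℕ) : ZMod d)) = 0 := h
      have hcast : ((B * 0 : ℕ) : ZMod d) - ((y : ℕ) : ZMod d) = t := by
        have h0 : ((B * 0 : ℕ) : ZMod d) = 0 := by norm_num
        have h1 : ((y : ℕ) : ZMod d) = 0 - ((t.val : ℕ) : ZMod d) := by
          rw [hy, Nat.cast_sub hvd.le, ZMod.natCast_self]
        rw [h0, h1, htv]
        ring
      rwa [sub_zero, hcast] at h'
  have hcomm2 : R * B = B * R := Nat.mul_comm R B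
  have hΛhalf : d / 2 - d / 4 ≤ Λ := by omega
  have hΨ0 : ∀ v : ℕ, d / 4 + 1 ≤ v → v ≤ d / 2 → psi d α 0 ((v : ℕ) : ZMod d) = 0 := by
    intro v h4 h2
    set e := v - d / 4 - 1 with he
    have hdm := Nat.div_add_mod e B
    have hmlt : e % B < B := Nat.mod_lt _ (by omega)
    set i := e / B with hi
    have hiR : i < R := by
      have hwlt : B * i < B * R := by omega
      exact Nat.lt_of_mul_lt_mul_left hwlt
    have hmul : (i + 1) * B = B * i + B := by ring
    set y := d / 4 + (i + 1) * B - v with hy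
    have hyB : y < B := by omega
    have hle1 : y ≤ d / 4 + (i + 1) * B := by omega
    have hsub : d / 4 + (i + 1) * B - y = v := by omega
    have hvlt : v < d := by omega
    have hvz : ((v : ℕ) : ZMod d) ≠ 0 := by
      intro hcon
      have hdvd : d ∣ v := (ZMod.natCast_eq_zero_iff v d).mp hcon
      have := Nat.le_of_dvd (by omega) hdvd
      omega
    have hp := hPmem y hyB
    have hq := hEmem i hiR
    have hcast : ((d / 4 + (i + 1) * B : ℕ) : ZMod d) - ((y : ℕ) : ZMod d) = ((v : ℕ) : ZMod d) := by
      rw [← Nat.cast_sub hle1, hsub]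
    have hne : ((0 : ZMod d), ((y : ℕ) : ZMod d))
        ≠ ((0 : ZMod d), ((d / 4 + (i + 1) * B : ℕ) : ZMod d)) := by
      intro hcon
      apply hvz
      have hsnd : ((y : ℕ) : ZMod d) = ((d / 4 + (i + 1) * B : ℕ) : ZMod d) :=
        congrArg Prod.snd hcon
      rw [← hcast, ← hsnd, sub_self]
    have h := hΨ _ _ hp hq hne
    have h' : psi d α ((0 : ZMod d) - 0)
        (((d / 4 + (i + 1) * B : ℕ) : ZMod d) - ((y : ℕ) : ZMod d)) = 0 := h
    rwa [sub_zero, hcast] at h'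
  -- endgame
  have hCj : ∀ j : ZMod d, (starRingEnd ℂ) (α (j + 1)) * α j = 0 := psi_inversion α hΨ1
  have hzero : ∀ j : ZMod d,
      ((starRingEnd ℂ) (α (j + 1)) * α (j + 1)) * ((starRingEnd ℂ) (α j) * α j) = 0 := by
    intro j
    have hc := hCj j
    have hring : ((starRingEnd ℂ) (α (j + 1)) * α (j + 1)) * ((starRingEnd ℂ) (α j) * α j)
        = ((starRingEnd ℂ) (α (j + 1)) * α j) * (α (j + 1) * (starRingEnd ℂ) (α j)) := by ring
    rw [hring, hc, zero_mul]
  have hsum0 : ∑ t : ZMod d, psi d α 0 t * (starRingEnd ℂ) (psi d α 0 t) * chi d (-t) = 0 := by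
    rw [psi_final_identity α]
    simp [hzero]
  have hre : (0 : ℝ) = ∑ t : ZMod d, Complex.normSq (psi d α 0 t) * (chi d (-t)).re := by
    have h1 : (∑ t : ZMod d, psi d α 0 t * (starRingEnd ℂ) (psi d α 0 t) * chi d (-t)).re = 0 := by
      rw [hsum0]
      rfl
    rw [Complex.re_sum] at h1
    rw [← h1]
    refine Finset.sum_congr rfl fun t _ => ?_
    rw [Complex.mul_conj, Complex.re_ofReal_mul]
  have hterm0 : Complex.normSq (psi d α 0 0) * (chi d (-(0 : ZMod d))).re = 1 := by
    have hpsi00 : psi d α 0 0 = 1 := by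
      rw [psi_zero_apply, ← hα, ip]
      refine Finset.sum_congr rfl fun i _ => ?_
      rw [zero_mul, chi_zero, one_mul]
    rw [hpsi00, neg_zero, chi_zero]
    simp
  have hsplit := Finset.sum_erase_add Finset.univ
      (fun t : ZMod d => Complex.normSq (psi d α 0 t) * (chi d (-t)).re) (Finset.mem_univ 0)
  have hnonneg : ∀ t ∈ Finset.univ.erase (0 : ZMod d),
      0 ≤ Complex.normSq (psi d α 0 t) * (chi d (-t)).re := by
    intro t ht
    have htne : t ≠ 0 := (Finset.mem_erase.mp ht).1
    by_cases hz : psi d α 0 t = 0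
    · rw [hz]
      simp
    · apply mul_nonneg (Complex.normSq_nonneg _)
      have hval1 : 1 ≤ t.val := by
        rcases Nat.eq_zero_or_pos t.val with h0 | h1
        · exact absurd ((ZMod.val_eq_zero t).mp h0) htne
        · omega
      have hvd : t.val < d := ZMod.val_lt t
      have hnegval : (-t).val = d - t.val := by
        rw [ZMod.neg_val]
        simp [htne]
      rcases le_or_gt t.val (d / 2) with h2 | h2
      · rcases le_or_gt t.val (d / 4) with h44 | h44
        · apply re_chi_nonneg
          right
          rw [hnegval]
          omega
        · exfalso
          apply hz
          have hp0 := hΨ0 t.val (by omega) h2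
          rwa [ZMod.natCast_rightInverse t] at hp0
      · rcases le_or_gt (d - t.val) (d / 4) with h44 | h44
        · apply re_chi_nonneg
          left
          rw [hnegval]
          omega
        · exfalso
          apply hz
          have hpsi := hΨ0 (d - t.val) (by omega) (by omega)
          have hcast2 : ((d - t.val : ℕ) : ZMod d) = -t := by
            rw [Nat.cast_sub hvd.le, ZMod.natCast_self, ZMod.natCast_rightInverse t]
            ring
          rw [hcast2, psi_zero_neg] at hpsi
          have hc := congrArg (starRingEnd ℂ) hpsi
          rwa [Complex.conj_conj, map_zero] at hc
  have hse : 0 ≤ ∑ t ∈ Finset.univ.erase (0 : ZMod d),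
      Complex.normSq (psi d α 0 t) * (chi d (-t)).re :=
    Finset.sum_nonneg hnonneg
  have hges : (1 : ℝ) ≤ ∑ t : ZMod d, Complex.normSq (psi d α 0 t) * (chi d (-t)).re := by
    rw [← hsplit]
    show (1 : ℝ) ≤ (∑ t ∈ Finset.univ.erase (0 : ZMod d),
        Complex.normSq (psi d α 0 t) * (chi d (-t)).re)
      + Complex.normSq (psi d α 0 0) * (chi d (-(0 : ZMod d))).re
    rw [hterm0]
    linarith
  rw [← hre] at hges
  linarith
end

section
/- Let d ≥ 4 be even and let α = (α_0,…,α_{d−1}) ∈ ℂ^d satisfy ⟨α, X^{d/2} Z^i α⟩ = 0 for every i = 0, 1, …, d/2. Then in fact ⟨α, X^{d/2} Z^i α⟩ = 0 for every i = 0, 1, …, d−1, one has α_j · α_{j+d/2 mod d} = 0 for every j ∈ ℤ/dℤ, and consequently at least d/2 of the coordinates of α are zero. -/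
/-!
With `c j = conj (α (j + d/2)) * α j`, the number `⟨α, X^{d/2} Z^n α⟩` is the discrete Fourier
transform of `c` at `-n`. Since `d/2` has order two in `ZMod d`, `c (j + d/2) = conj (c j)`, so
the transform at `-n` is, up to a root of unity, the conjugate of the transform at `n`. Hence
vanishing for `n = 0, …, d/2` forces vanishing for all `n`, and Fourier inversion gives `c = 0`.
Finally `j ↦ j + d/2` maps the support of `α` injectively into its zero set.
-/

open Complex

open ZMod

lemma Set.card_le_two_mul_ncard_of_injective {X : Type*} [Finite X] {s : Set X} {f : X → X}
    (hf : Function.Injective f) (hs : ∀ x ∉ s, f x ∈ s) : Nat.card X ≤ 2 * s.ncard := by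
  have hcompl : sᶜ.ncard ≤ s.ncard := Set.ncard_le_ncard_of_injOn f hs hf.injOn
  have := Set.ncard_add_ncard_compl s
  omega

namespace ZMod

variable {d : ℕ}

lemma natCast_half_add_self (heven : Even d) :
    ((d / 2 : ℕ) : ZMod d) + ((d / 2 : ℕ) : ZMod d) = 0 := by
  rw [← Nat.cast_add, ← two_mul, Nat.two_mul_div_two_of_even heven, natCast_self]

lemma val_le_half_or_neg_val_le_half [NeZero d] (n : ZMod d) :
    n.val ≤ d / 2 ∨ (-n).val ≤ d / 2 := by
  rw [neg_val]
  split_ifs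
  · exact Or.inr (Nat.zero_le _)
  · have := n.val_lt
    omega

end ZMod

section shiftCorrelation

variable {d : ℕ}

noncomputable def shiftCorrelation (m : ZMod d) (α : ZMod d → ℂ) : ZMod d → ℂ :=
  fun j => (starRingEnd ℂ) (α (j + m)) * α j

lemma shiftCorrelation_add_self {m : ZMod d} (hm : m + m = 0) (α : ZMod d → ℂ) (j : ZMod d) :
    shiftCorrelation m α (j + m) = (starRingEnd ℂ) (shiftCorrelation m α j) := by
  simp only [shiftCorrelation, add_assoc, hm, add_zero, map_mul, conj_conj, mul_comm]

lemma mul_apply_add_eq_zero_of_shiftCorrelation_eq_zero {m : ZMod d} {α : ZMod d → ℂ}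
    (h : shiftCorrelation m α = 0) (j : ZMod d) : α j * α (j + m) = 0 := by
  have hj : (starRingEnd ℂ) (α (j + m)) * α j = 0 := congrFun h j
  rw [mul_eq_zero, map_eq_zero] at hj
  rw [mul_comm, mul_eq_zero]
  exact hj

end shiftCorrelation

section Pauli

variable {d : ℕ} [NeZero d]

lemma ω_pow_eq_stdAddChar (k : ℕ) : ω d ^ k = stdAddChar (k : ZMod d) := by
  rw [ω, ← Complex.exp_nat_mul, stdAddChar_apply, toCircle_natCast]
  ring_nf

lemma pU_apply (m n : ZMod d) (α : ZMod d → ℂ) (k : ZMod d) :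
    pU d m n α k = stdAddChar (n * (k - m)) * α (k - m) := by
  rw [pU, ω_pow_eq_stdAddChar, Nat.cast_mul, natCast_zmod_val, natCast_zmod_val]

lemma ip_pU_self (m n : ZMod d) (α : ZMod d → ℂ) :
    ip d α (pU d m n α) = 𝓕 (shiftCorrelation m α) (-n) := by
  rw [ip, dft_apply]
  refine Fintype.sum_equiv (Equiv.subRight m) _ _ fun k => ?_
  simp only [pU_apply, Equiv.subRight_apply, sub_add_cancel, shiftCorrelation, smul_eq_mul,
    mul_neg, neg_neg, mul_comm _ n]
  ring

lemma conj_ip_pU_self {m : ZMod d} (hm : m + m = 0) (n : ZMod d) (α : ZMod d → ℂ) :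
    (starRingEnd ℂ) (ip d α (pU d m n α)) = stdAddChar (m * n) * ip d α (pU d m (-n) α) := by
  rw [ip_pU_self, ip_pU_self, neg_neg, dft_apply, dft_apply, map_sum, Finset.mul_sum]
  refine Fintype.sum_equiv (Equiv.addRight m) _ _ fun j => ?_
  simp only [Equiv.coe_addRight, smul_eq_mul, map_mul, ← AddChar.map_neg_eq_conj,
    ← shiftCorrelation_add_self hm, ← mul_assoc, ← AddChar.map_add_eq_mul]
  congr 2
  ring

lemma ip_pU_self_eq_zero_of_forall_le_half {m : ZMod d} (hm : m + m = 0) {α : ZMod d → ℂ}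
    (h : ∀ i : ℕ, i ≤ d / 2 → ip d α (pU d m i α) = 0) (n : ZMod d) :
    ip d α (pU d m n α) = 0 := by
  rcases val_le_half_or_neg_val_le_half n with hn | hn
  · simpa only [natCast_zmod_val] using h n.val hn
  · have hneg := h (-n).val hn
    rw [natCast_zmod_val] at hneg
    rw [← map_eq_zero (starRingEnd ℂ), conj_ip_pU_self hm, hneg, mul_zero]

lemma shiftCorrelation_eq_zero_of_forall_ip_pU_self {m : ZMod d} {α : ZMod d → ℂ}
    (h : ∀ n : ZMod d, ip d α (pU d m n α) = 0) : shiftCorrelation m α = 0 := by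
  refine dft.injective (funext fun n => ?_)
  rw [map_zero, Pi.zero_apply, ← neg_neg n, ← ip_pU_self, h]

end Pauli

theorem stmt_12_general (d : ℕ) [NeZero d] (heven : Even d) (α : ZMod d → ℂ)
    (h : ∀ i : ℕ, i ≤ d / 2 →
      ip d α (pU d ((d / 2 : ℕ) : ZMod d) (i : ZMod d) α) = 0) :
    (∀ i : ℕ, i ≤ d - 1 →
        ip d α (pU d ((d / 2 : ℕ) : ZMod d) (i : ZMod d) α) = 0) ∧
      (∀ j : ZMod d, α j * α (j + ((d / 2 : ℕ) : ZMod d)) = 0) ∧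
      d / 2 ≤ ({j | α j = 0} : Set (ZMod d)).ncard := by
  have hip := ip_pU_self_eq_zero_of_forall_le_half (natCast_half_add_self heven) h
  have hmul := mul_apply_add_eq_zero_of_shiftCorrelation_eq_zero
    (shiftCorrelation_eq_zero_of_forall_ip_pU_self hip)
  refine ⟨fun i _ => hip i, hmul, ?_⟩
  have hcard : Nat.card (ZMod d) ≤ 2 * ({j | α j = 0} : Set (ZMod d)).ncard :=
    Set.card_le_two_mul_ncard_of_injective (add_left_injective _)
      fun j hj => (mul_eq_zero.mp (hmul j)).resolve_left hj
  rw [Nat.card_zmod] at hcard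
  omega

/-- For even `d ≥ 4`: if `⟨α, X^{d/2} Z^i α⟩ = 0` for `i = 0,…,d/2`, then in
fact `⟨α, X^{d/2} Z^i α⟩ = 0` for all `i = 0,…,d-1`, one has
`α_j α_{j+d/2} = 0` for all `j ∈ ℤ/dℤ`, and at least `d/2` of the coordinates
of `α` vanish. -/
theorem stmt_12 (d : ℕ) [NeZero d] (hd : 4 ≤ d) (heven : Even d) (α : ZMod d → ℂ)
    (h : ∀ i : ℕ, i ≤ d / 2 →
      ip d α (pU d ((d / 2 : ℕ) : ZMod d) (i : ZMod d) α) = 0) :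
    (∀ i : ℕ, i ≤ d - 1 →
        ip d α (pU d ((d / 2 : ℕ) : ZMod d) (i : ZMod d) α) = 0) ∧
      (∀ j : ZMod d, α j * α (j + ((d / 2 : ℕ) : ZMod d)) = 0) ∧
      d / 2 ≤ ({j | α j = 0} : Set (ZMod d)).ncard :=
  stmt_12_general d heven α h
end
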